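/- arXiv:1002.3786 — 2 statements merged into one kernel-verified Lean document; each statement's English description precedes it below -/
import Mathlib

section
/- Let α, β > -1, γ ∈ ℝ, w > -1ᵗʰ (w > 0 suffices). Then ∫₀¹ λ^α (1-λ)^β (1+wλ)^{-γ} dλ = (w+1)^{-(α+1)} ∫₀¹ t^α (1-t)^β (1 - t w/(w+1))^{-α-β+γ-2} dt. -/
open intervalIntegral Real MeasureTheory Set

lemma beta_integrand_integrable {α β : ℝ} (hα : -1 < α) (hβ : -1 < β) :
    IntegrableOn (fun t : ℝ => t ^ α * (1 - t) ^ β) (Icc 0 1) := by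
  have h1 : IntegrableOn (fun t : ℝ => t ^ α * (1 - t) ^ β) (Icc (0:ℝ) (1/2)) := by
    have ha : IntegrableOn (fun t : ℝ => t ^ α) (Icc (0:ℝ) (1/2)) := by
      rw [integrableOn_Icc_iff_integrableOn_Ioc]
      have := (intervalIntegrable_rpow' (a := 0) (b := 1/2) hα)
      rwa [intervalIntegrable_iff_integrableOn_Ioc_of_le (by norm_num)] at this
    have hb : ContinuousOn (fun t : ℝ => (1 - t) ^ β) (Icc (0:ℝ) (1/2)) := by
      apply ContinuousOn.rpow_const (by fun_prop)
      intro x hx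
      left
      simp only [mem_Icc] at hx
      nlinarith [hx.2]
    exact ha.mul_continuousOn hb isCompact_Icc
  have h2 : IntegrableOn (fun t : ℝ => t ^ α * (1 - t) ^ β) (Icc (1/2:ℝ) 1) := by
    have hb : IntegrableOn (fun t : ℝ => (1 - t) ^ β) (Icc (1/2:ℝ) 1) := by
      rw [integrableOn_Icc_iff_integrableOn_Ioc]
      have h := ((intervalIntegrable_rpow' (a := 0) (b := 1/2) hβ).comp_sub_left 1).symm
      norm_num at h
      rwa [intervalIntegrable_iff_integrableOn_Ioc_of_le (by norm_num)] at h
    have ha : ContinuousOn (fun t : ℝ => t ^ α) (Icc (1/2:ℝ) 1) := by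
      apply ContinuousOn.rpow_const (by fun_prop)
      intro x hx
      left
      simp only [mem_Icc] at hx
      nlinarith [hx.1]
    exact (IntegrableOn.continuousOn_mul ha hb isCompact_Icc)
  have := h1.union h2
  rwa [Icc_union_Icc_eq_Icc (by norm_num) (by norm_num)] at this

lemma key_eq (α β γ w : ℝ) (hw : 0 < w) {l : ℝ} (hl0 : 0 ≤ l) (hl1 : l ≤ 1) :
    ((w+1)*l/(1+w*l)) ^ α * (1 - (w+1)*l/(1+w*l)) ^ β *
        (1 - ((w+1)*l/(1+w*l)) * w / (w+1)) ^ (-α-β+γ-2) * ((w+1)/(1+w*l)^2)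
      = (w+1) ^ (α+1) * (l ^ α * (1-l) ^ β * (1+w*l) ^ (-γ)) := by
  have hw1 : (0:ℝ) < w + 1 := by linarith
  have hs : (0:ℝ) < 1 + w * l := by nlinarith
  have e1 : 1 - (w+1)*l/(1+w*l) = (1-l)/(1+w*l) := by field_simp; ring
  have e2 : 1 - ((w+1)*l/(1+w*l)) * w / (w+1) = 1/(1+w*l) := by
    field_simp; ring
  rw [e1, e2]
  have A : ((w+1)*l/(1+w*l)) ^ α = (w+1) ^ α * l ^ α * ((1+w*l) ^ α)⁻¹ := by
    rw [div_rpow (by positivity) hs.le, mul_rpow hw1.le hl0, div_eq_mul_inv]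
  have B : ((1-l)/(1+w*l)) ^ β = (1-l) ^ β * ((1+w*l) ^ β)⁻¹ := by
    rw [div_rpow (by linarith) hs.le, div_eq_mul_inv]
  have C : ((1:ℝ)/(1+w*l)) ^ (-α-β+γ-2) = (1+w*l) ^ (α+β-γ+2) := by
    rw [one_div, ← rpow_neg_one (1+w*l), ← rpow_mul hs.le]
    congr 1
    ring
  have D : (w+1)/(1+w*l)^2 = (w+1) * (((1+w*l) ^ ((2:ℕ):ℝ)))⁻¹ := by
    rw [rpow_natCast, div_eq_mul_inv]
  rw [A, B, C, D]
  have E : ((1+w*l) ^ α)⁻¹ * ((1+w*l) ^ β)⁻¹ * (1+w*l) ^ (α+β-γ+2) *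
      ((1+w*l) ^ ((2:ℕ):ℝ))⁻¹ = (1+w*l) ^ (-γ) := by
    rw [← rpow_neg hs.le, ← rpow_neg hs.le, ← rpow_neg hs.le,
      ← rpow_add hs, ← rpow_add hs, ← rpow_add hs]
    norm_num
    congr 1
    ring
  have F : (w+1) ^ (α+1) = (w+1) ^ α * (w+1) := by
    rw [rpow_add hw1, rpow_one]
  rw [F, ← E]
  ring

theorem beta_type_integral_substitution (α β γ w : ℝ)
    (hα : -1 < α) (hβ : -1 < β) (hw : 0 < w) :
    ∫ l in (0:ℝ)..1, l ^ α * (1 - l) ^ β * (1 + w * l) ^ (-γ) =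
      (w + 1) ^ (-(α + 1)) *
        ∫ t in (0:ℝ)..1, t ^ α * (1 - t) ^ β *
          (1 - t * w / (w + 1)) ^ (-α - β + γ - 2) := by
  have hw1 : (0:ℝ) < w + 1 := by linarith
  set g : ℝ → ℝ := fun t => t ^ α * (1 - t) ^ β * (1 - t * w / (w + 1)) ^ (-α - β + γ - 2)
    with hgdef
  set f : ℝ → ℝ := fun l => (w + 1) * l / (1 + w * l) with hfdef
  set F : ℝ → ℝ := fun l => (w + 1) / (1 + w * l) ^ 2 with hFdef
  have hspos : ∀ l : ℝ, 0 ≤ l → 0 < 1 + w * l := fun l hl => by nlinarith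
  have hf0 : f 0 = 0 := by simp [hfdef]
  have hf1 : f 1 = 1 := by
    simp only [hfdef, mul_one]
    rw [div_eq_one_iff_eq (by nlinarith)]
    ring
  have himg_cc : f '' Icc 0 1 ⊆ Icc 0 1 := by
    rintro _ ⟨x, ⟨hx0, hx1⟩, rfl⟩
    have hsx := hspos x hx0
    constructor
    · positivity
    · rw [div_le_one hsx]; nlinarith
  have himg_oo : f '' Ioo 0 1 ⊆ Ioo 0 1 := by
    rintro _ ⟨x, ⟨hx0, hx1⟩, rfl⟩
    have hsx := hspos x hx0.le
    constructor
    · positivity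
    · rw [div_lt_one hsx]; nlinarith
  have hcontf : ContinuousOn f (uIcc 0 1) := by
    rw [uIcc_of_le zero_le_one]
    apply ContinuousOn.div (by fun_prop) (by fun_prop)
    intro x hx
    exact (hspos x hx.1).ne'
  have hderiv : ∀ x ∈ Ioo (min (0:ℝ) 1) (max 0 1), HasDerivWithinAt f (F x) (Ioi x) x := by
    intro x hx
    simp only [show min (0:ℝ) 1 = 0 by norm_num, show max (0:ℝ) 1 = 1 by norm_num] at hx
    have hsx := hspos x hx.1.le
    have h1 : HasDerivAt (fun l : ℝ => (w + 1) * l) (w + 1) x := by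
      simpa using (hasDerivAt_id x).const_mul (w + 1)
    have h2 : HasDerivAt (fun l : ℝ => 1 + w * l) w x := by
      simpa using ((hasDerivAt_id x).const_mul w).const_add 1
    have h3 := h1.div h2 hsx.ne'
    have : ((w + 1) * (1 + w * x) - (w + 1) * x * w) / (1 + w * x) ^ 2 = F x := by
      rw [hFdef]
      congr 1
      ring
    rw [this] at h3
    exact h3.hasDerivWithinAt
  have hbase : ∀ t ∈ Icc (0:ℝ) 1, 0 < 1 - t * w / (w + 1) := by
    intro t ht
    rw [sub_pos, div_lt_one hw1]
    nlinarith [ht.1, ht.2]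
  have hgcont : ContinuousOn g (f '' Ioo 0 1) := by
    refine ContinuousOn.mono ?_ himg_oo
    intro t ht
    apply ContinuousAt.continuousWithinAt
    have h3 := hbase t (Ioo_subset_Icc_self ht)
    exact ((continuousAt_id.rpow_const (Or.inl ht.1.ne')).mul
      ((continuousAt_const.sub continuousAt_id).rpow_const
        (Or.inl (sub_ne_zero.2 ht.2.ne')))).mul
      ((continuousAt_const.sub ((continuousAt_id.mul continuousAt_const).div_const _)).rpow_const
        (Or.inl h3.ne'))
  have hcont_h : ContinuousOn (fun t : ℝ => (1 - t * w / (w + 1)) ^ (-α - β + γ - 2)) (Icc 0 1) := by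
    apply ContinuousOn.rpow_const (by fun_prop)
    intro t ht
    exact Or.inl (hbase t ht).ne'
  have hgint : IntegrableOn g (Icc 0 1) :=
    (beta_integrand_integrable hα hβ).mul_continuousOn hcont_h isCompact_Icc
  have hg1 : IntegrableOn g (f '' uIcc 0 1) := by
    apply hgint.mono_set
    rw [uIcc_of_le zero_le_one]
    exact himg_cc
  have key : EqOn (fun l => (g ∘ f) l * F l)
      (fun l => (w + 1) ^ (α + 1) * (l ^ α * (1 - l) ^ β * (1 + w * l) ^ (-γ))) (Icc 0 1) := by
    intro l hl
    exact key_eq α β γ w hw hl.1 hl.2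
  have hcont_h2 : ContinuousOn (fun l : ℝ => (1 + w * l) ^ (-γ)) (Icc 0 1) := by
    apply ContinuousOn.rpow_const (by fun_prop)
    intro l hl
    exact Or.inl (hspos l hl.1).ne'
  have hg2 : IntegrableOn (fun x => (g ∘ f) x * F x) (uIcc 0 1) := by
    rw [uIcc_of_le zero_le_one]
    refine IntegrableOn.congr_fun ?_ key.symm measurableSet_Icc
    exact ((beta_integrand_integrable hα hβ).mul_continuousOn hcont_h2 isCompact_Icc).const_mul _
  have hgcont' : ContinuousOn g (f '' Ioo (min (0:ℝ) 1) (max 0 1)) := by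
    rw [show min (0:ℝ) 1 = 0 by norm_num, show max (0:ℝ) 1 = 1 by norm_num]
    exact hgcont
  have main := integral_comp_mul_deriv''' hcontf hderiv hgcont' hg1 hg2
  rw [hf0, hf1] at main
  have congr1 : (∫ x in (0:ℝ)..1, (g ∘ f) x * F x) =
      ∫ x in (0:ℝ)..1, (w + 1) ^ (α + 1) * (x ^ α * (1 - x) ^ β * (1 + w * x) ^ (-γ)) := by
    apply intervalIntegral.integral_congr
    rw [uIcc_of_le zero_le_one]
    exact key
  rw [congr1, intervalIntegral.integral_const_mul] at main
  rw [← main, ← mul_assoc, ← rpow_add hw1,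
    show -(α + 1) + (α + 1) = 0 by ring, rpow_zero, one_mul]
end

section
/- Let F, D* be invertible l×l diagonal matrices with I + D*(I-F) invertible, Q an m×l matrix with Q'Q = I_l, and ỹ ∈ ℝ^m, v ∈ ℝ^l. Define G = ‖ỹ‖² + v'D*⁻¹v - (Q'ỹ + D*⁻¹v)'(I+D*⁻¹)⁻¹F(Q'ỹ + D*⁻¹v). Then G = (ỹ - QF(I+D*(I-F))⁻¹v)'(I + QFD*(I+D*(I-F))⁻¹Q')⁻¹(ỹ - QF(I+D*(I-F))⁻¹v) + v'(D*+I)(I-F)D*⁻¹(I+D*(I-F))⁻¹v. -/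
/-!
Write `a = Qᵀ ỹ`. Because `QᵀQ = 1`, the inverse `(1 + Q K Qᵀ)⁻¹` is `1 - Q A Qᵀ` as soon as
`(1 + K)(1 - A) = 1`, and `‖ỹ - Q p‖² = ‖ỹ‖² - ‖a‖² + ‖a - p‖²`; this turns the right-hand side
into a quadratic form in `(a, v)` on `ℝˡ`. There the identity is a completion of the square, valid
for any symmetric `A` with `A C = (1 - A) P` and `C - Cᵀ A C = Pᵀ (1 - A) P + S`. For the diagonal
matrices of the theorem, these conditions are scalar identities in each diagonal entry.
-/

open Matrix

namespace Matrix

variable {m l R : Type*} [Fintype m] [Fintype l] [DecidableEq m] [DecidableEq l] [CommRing R]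

theorem inv_one_add_mul_mul_transpose {Q : Matrix m l R} (hQ : Qᵀ * Q = 1)
    {K A : Matrix l l R} (h : (1 + K) * (1 - A) = 1) :
    (1 + Q * K * Qᵀ)⁻¹ = 1 - Q * A * Qᵀ := by
  have hKA : K - A - K * A = 0 := by rw [← sub_eq_zero.mpr h]; noncomm_ring
  have hQKQA : Q * K * Qᵀ * (Q * A * Qᵀ) = Q * (K * A) * Qᵀ := by
    simp only [Matrix.mul_assoc]; rw [← Matrix.mul_assoc Qᵀ Q, hQ, Matrix.one_mul]
  refine inv_eq_right_inv ?_
  calc (1 + Q * K * Qᵀ) * (1 - Q * A * Qᵀ)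
      = 1 + Q * (K - A - K * A) * Qᵀ := by
        simp only [Matrix.add_mul, Matrix.mul_sub, Matrix.sub_mul, Matrix.mul_one, Matrix.one_mul,
          hQKQA]
        abel
    _ = 1 := by rw [hKA, Matrix.mul_zero, Matrix.zero_mul, add_zero]

theorem sub_mulVec_dotProduct_one_sub_mul_mul_transpose {Q : Matrix m l R} (hQ : Qᵀ * Q = 1)
    (A : Matrix l l R) (y : m → R) (p : l → R) :
    (y - Q *ᵥ p) ⬝ᵥ (1 - Q * A * Qᵀ) *ᵥ (y - Q *ᵥ p) =
      y ⬝ᵥ y - Qᵀ *ᵥ y ⬝ᵥ Qᵀ *ᵥ y + (Qᵀ *ᵥ y - p) ⬝ᵥ (1 - A) *ᵥ (Qᵀ *ᵥ y - p) := by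
  have hQQ (x z : l → R) : Q *ᵥ x ⬝ᵥ Q *ᵥ z = x ⬝ᵥ z := by
    rw [← dotProduct_transpose_mulVec, mulVec_mulVec, hQ, one_mulVec, dotProduct_comm]
  have hyQ (x : l → R) : y ⬝ᵥ Q *ᵥ x = Qᵀ *ᵥ y ⬝ᵥ x := by
    rw [← dotProduct_transpose_mulVec, dotProduct_comm]
  have hproj : Qᵀ *ᵥ (y - Q *ᵥ p) = Qᵀ *ᵥ y - p := by
    rw [mulVec_sub, mulVec_mulVec, hQ, one_mulVec]
  have hnorm : (y - Q *ᵥ p) ⬝ᵥ (y - Q *ᵥ p) =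
      y ⬝ᵥ y - Qᵀ *ᵥ y ⬝ᵥ Qᵀ *ᵥ y + (Qᵀ *ᵥ y - p) ⬝ᵥ (Qᵀ *ᵥ y - p) := by
    simp only [dotProduct_sub, sub_dotProduct, hQQ, hyQ, dotProduct_comm (Q *ᵥ p) y,
      dotProduct_comm p (Qᵀ *ᵥ y)]
    ring
  rw [sub_mulVec, one_mulVec, ← mulVec_mulVec, ← mulVec_mulVec, dotProduct_sub,
    ← dotProduct_transpose_mulVec, hproj, hnorm, dotProduct_comm (A *ᵥ _)]
  simp only [sub_mulVec, one_mulVec, dotProduct_sub]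
  ring

theorem completing_square {A C P S : Matrix l l R} (hA : Aᵀ = A) (hAC : A * C = (1 - A) * P)
    (hC : C - Cᵀ * A * C = Pᵀ * (1 - A) * P + S) (a v : l → R) :
    v ⬝ᵥ C *ᵥ v - (a + C *ᵥ v) ⬝ᵥ A *ᵥ (a + C *ᵥ v) =
      (a - P *ᵥ v) ⬝ᵥ (1 - A) *ᵥ (a - P *ᵥ v) - a ⬝ᵥ a + v ⬝ᵥ S *ᵥ v := by
  have hsymm (x z : l → R) : x ⬝ᵥ A *ᵥ z = z ⬝ᵥ A *ᵥ x := by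
    rw [← dotProduct_transpose_mulVec, hA]
  have hcross : a ⬝ᵥ A *ᵥ C *ᵥ v = a ⬝ᵥ P *ᵥ v - a ⬝ᵥ A *ᵥ P *ᵥ v := by
    rw [mulVec_mulVec, hAC, sub_mul, Matrix.one_mul, sub_mulVec, ← mulVec_mulVec, dotProduct_sub]
  have hquad : v ⬝ᵥ C *ᵥ v - C *ᵥ v ⬝ᵥ A *ᵥ C *ᵥ v =
      P *ᵥ v ⬝ᵥ P *ᵥ v - P *ᵥ v ⬝ᵥ A *ᵥ P *ᵥ v + v ⬝ᵥ S *ᵥ v := by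
    have := congrArg (fun M => v ⬝ᵥ M *ᵥ v) hC
    simp only [sub_mulVec, add_mulVec, one_mulVec, ← mulVec_mulVec, dotProduct_sub,
      dotProduct_add, dotProduct_transpose_mulVec] at this
    rwa [dotProduct_comm (A *ᵥ _), sub_dotProduct, dotProduct_comm (A *ᵥ P *ᵥ v)] at this
  rw [sub_mulVec, one_mulVec, dotProduct_sub]
  simp only [mulVec_add, mulVec_sub, dotProduct_add, add_dotProduct, dotProduct_sub, sub_dotProduct]
  rw [hsymm (C *ᵥ v) a, dotProduct_comm (P *ᵥ v) a, hsymm (P *ᵥ v) a]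
  linear_combination hquad - 2 * hcross

theorem inv_diagonal_of_ne_zero {K : Type*} [Field K] {v : l → K} (hv : ∀ i, v i ≠ 0) :
    (diagonal v)⁻¹ = diagonal fun i => (v i)⁻¹ :=
  inv_eq_right_inv (by simp [hv])

theorem ne_zero_of_isUnit_det_diagonal {K : Type*} [Field K] {v : l → K}
    (h : IsUnit (diagonal v).det) (i : l) : v i ≠ 0 := by
  rw [← isUnit_iff_isUnit_det, isUnit_diagonal, Pi.isUnit_iff] at h
  exact (h i).ne_zero

end Matrix

theorem quadratic_form_decomposition_general (l m : ℕ) (F Dstar : Matrix (Fin l) (Fin l) ℝ)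
    (hF : F.IsDiag) (hD : Dstar.IsDiag)
    (hDunit : IsUnit Dstar.det)
    (h1 : IsUnit (1 + Dstar * (1 - F)).det)
    (h2 : IsUnit (1 + Dstar⁻¹).det)
    (Q : Matrix (Fin m) (Fin l) ℝ) (hQ : Qᵀ * Q = 1)
    (ytilde : Fin m → ℝ) (v : Fin l → ℝ) :
    ytilde ⬝ᵥ ytilde + v ⬝ᵥ Dstar⁻¹.mulVec v -
        (Qᵀ.mulVec ytilde + Dstar⁻¹.mulVec v) ⬝ᵥ
          ((1 + Dstar⁻¹)⁻¹ * F).mulVec (Qᵀ.mulVec ytilde + Dstar⁻¹.mulVec v) =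
      (ytilde - (Q * F * (1 + Dstar * (1 - F))⁻¹).mulVec v) ⬝ᵥ
          ((1 + Q * F * Dstar * (1 + Dstar * (1 - F))⁻¹ * Qᵀ)⁻¹).mulVec
            (ytilde - (Q * F * (1 + Dstar * (1 - F))⁻¹).mulVec v) +
        v ⬝ᵥ ((Dstar + 1) * (1 - F) * Dstar⁻¹ * (1 + Dstar * (1 - F))⁻¹).mulVec v := by
  obtain ⟨f, rfl⟩ : ∃ f, F = diagonal f := ⟨F.diag, hF.diagonal_diag.symm⟩
  obtain ⟨d, rfl⟩ : ∃ d, Dstar = diagonal d := ⟨Dstar.diag, hD.diagonal_diag.symm⟩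
  have hd := ne_zero_of_isUnit_det_diagonal hDunit
  simp only [← diagonal_one, diagonal_add, diagonal_sub, diagonal_mul_diagonal,
    inv_diagonal_of_ne_zero hd] at h1 h2
  have hu := ne_zero_of_isUnit_det_diagonal h1
  have hw (i : Fin l) : d i + 1 ≠ 0 := fun h => ne_zero_of_isUnit_det_diagonal h2 i (by
    rw [show 1 + (d i)⁻¹ = (d i + 1) / d i by field_simp [hd i], h, zero_div])
  rw [show Q * diagonal f * diagonal d * (1 + diagonal d * (1 - diagonal f))⁻¹ =
      Q * (diagonal f * diagonal d * (1 + diagonal d * (1 - diagonal f))⁻¹) by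
        simp only [Matrix.mul_assoc],
    inv_one_add_mul_mul_transpose hQ (A := (1 + (diagonal d)⁻¹)⁻¹ * diagonal f),
    Matrix.mul_assoc Q, ← mulVec_mulVec v Q, sub_mulVec_dotProduct_one_sub_mul_mul_transpose hQ,
    add_sub_assoc, completing_square]
  · ring
  -- The remaining goals are the hypotheses of the two lemmas, all between diagonal matrices.
  all_goals
    simp only [← diagonal_one, diagonal_add, diagonal_sub, diagonal_mul_diagonal, diagonal_transpose,
      inv_diagonal_of_ne_zero hd, inv_diagonal_of_ne_zero hu,
      inv_diagonal_of_ne_zero (ne_zero_of_isUnit_det_diagonal h2)]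
  all_goals
    congr 1
    funext i
    have := hd i
    have := hu i
    have := hw i
    field_simp
    ring

theorem quadratic_form_decomposition (l m : ℕ) (F Dstar : Matrix (Fin l) (Fin l) ℝ)
    (hF : F.IsDiag) (hD : Dstar.IsDiag)
    (hFunit : IsUnit F.det) (hDunit : IsUnit Dstar.det)
    (h1 : IsUnit (1 + Dstar * (1 - F)).det)
    (h2 : IsUnit (1 + Dstar⁻¹).det)
    (Q : Matrix (Fin m) (Fin l) ℝ) (hQ : Qᵀ * Q = 1)
    (ytilde : Fin m → ℝ) (v : Fin l → ℝ) :
    ytilde ⬝ᵥ ytilde + v ⬝ᵥ Dstar⁻¹.mulVec v -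
        (Qᵀ.mulVec ytilde + Dstar⁻¹.mulVec v) ⬝ᵥ
          ((1 + Dstar⁻¹)⁻¹ * F).mulVec (Qᵀ.mulVec ytilde + Dstar⁻¹.mulVec v) =
      (ytilde - (Q * F * (1 + Dstar * (1 - F))⁻¹).mulVec v) ⬝ᵥ
          ((1 + Q * F * Dstar * (1 + Dstar * (1 - F))⁻¹ * Qᵀ)⁻¹).mulVec
            (ytilde - (Q * F * (1 + Dstar * (1 - F))⁻¹).mulVec v) +
        v ⬝ᵥ ((Dstar + 1) * (1 - F) * Dstar⁻¹ * (1 + Dstar * (1 - F))⁻¹).mulVec v :=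
  quadratic_form_decomposition_general l m F Dstar hF hD hDunit h1 h2 Q hQ ytilde v
end
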